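/- For every t ≥ 1, let I_1 < I_2 < … < I_{s_t} be all holes at level t. Then the minimal cyclic gap between consecutive holes equals 2^t: min({I_{j+1} − I_j : 1 ≤ j ≤ s_t − 1} ∪ {p_t − I_{s_t} + I_1}) = 2^t. In particular, 2^t and 2^{t+1} are holes at level t, and the difference of any two holes at level t is divisible by 2^t. -/

import Mathlib

open scoped BigOperators

-- The indicator function of the `\mathscr{B}`-free integers for
--`\mathscr{B} = {2^i b_i : i \ge 1}`. 
open Classical in
noncomputable def eta (b : ℕ → ℕ) : ℤ → ℕ := fun n =>
  if (∀ i : ℕ, 1 ≤ i → ¬ ((2 : ℤ) ^ i * (b i : ℤ) ∣ n)) then 1 else 0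

-- `Per x s` is the set of `s`-periodic positions of `x`. 
def Per (x : ℤ → ℕ) (s : ℕ) : Set ℤ := {n : ℤ | ∀ k : ℤ, x (n + k * s) = x n}

-- `pp b t = 2^t * b_1 * b_2 * \cdots * b_t`. 
def pp (b : ℕ → ℕ) (t : ℕ) : ℕ := 2 ^ t * ∏ i ∈ Finset.Icc 1 t, b i

-- `s` is a hole at level `t`. 
def Hole (b : ℕ → ℕ) (t : ℕ) (s : ℤ) : Prop :=
  0 ≤ s ∧ s < (pp b t : ℤ) ∧ s ∉ Per (eta b) (pp b t)

/-!
Write `p_t = 2^t P` with `P = b_1 ⋯ b_t` odd. If `2^t ∤ n`, then no `2^i b_i` with `i > t`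
divides any `n + k p_t`, while divisibility by `2^i b_i` with `i ≤ t` does not depend on `k`;
so `n` is `p_t`-periodic, every hole is a multiple of `2^t`, and every cyclic gap is a positive
multiple of `2^t`. Conversely, `2^t m` with `0 ≤ m < P` and no `b_i` (`i ≤ t`) dividing `m` is
a hole: the shift by `(1 - m) p_t` is `2^t N` with `N ≡ m (mod P)` odd, which is `B`-free,
while, `P` being prime to `2 b_{t+1}`, some other shift is divisible by `2^{t+1} b_{t+1}`.
Since every `b_i ≥ 3`, this applies to `m = 1` and `m = 2`, and the holes `2^t`, `2^{t+1}`
realise the gap `2^t`.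
-/

def bProd (b : ℕ → ℕ) (t : ℕ) : ℕ := ∏ i ∈ Finset.Icc 1 t, b i

lemma notMem_Per_of_ne {x : ℤ → ℕ} {s : ℕ} {n k k' : ℤ}
    (h : x (n + k * s) ≠ x (n + k' * s)) : n ∉ Per x s :=
  fun hn => h ((hn k).trans (hn k').symm)

section

variable {b : ℕ → ℕ} {t : ℕ}

lemma pp_eq_two_pow_mul_bProd : (pp b t : ℤ) = 2 ^ t * bProd b t := by
  push_cast [pp, bProd]; rfl

lemma two_pow_dvd_pp : (2 : ℤ) ^ t ∣ pp b t := ⟨_, pp_eq_two_pow_mul_bProd⟩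

lemma dvd_bProd {i : ℕ} (hi : 1 ≤ i) (hit : i ≤ t) : (b i : ℤ) ∣ bProd b t := by
  exact_mod_cast Finset.dvd_prod_of_mem b (Finset.mem_Icc.mpr ⟨hi, hit⟩)

lemma two_pow_mul_dvd_pp {i : ℕ} (hi : 1 ≤ i) (hit : i ≤ t) :
    (2 : ℤ) ^ i * b i ∣ pp b t := by
  rw [pp_eq_two_pow_mul_bProd]
  exact mul_dvd_mul (pow_dvd_pow 2 hit) (dvd_bProd hi hit)

lemma eta_add_mul_pp_of_not_dvd {n : ℤ} (hn : ¬ (2 : ℤ) ^ t ∣ n) (k : ℤ) :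
    eta b (n + k * pp b t) = eta b n := by
  have hshift : ¬ (2 : ℤ) ^ t ∣ n + k * pp b t := by
    rwa [dvd_add_left (dvd_mul_of_dvd_right two_pow_dvd_pp k)]
  have key : ∀ i, 1 ≤ i →
      ((2 : ℤ) ^ i * b i ∣ n + k * pp b t ↔ (2 : ℤ) ^ i * b i ∣ n) := by
    intro i hi
    rcases le_or_gt i t with hit | hti
    · exact dvd_add_left (dvd_mul_of_dvd_right (two_pow_mul_dvd_pp hi hit) k)
    · have h : (2 : ℤ) ^ t ∣ 2 ^ i * b i := (pow_dvd_pow 2 hti.le).mul_right _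
      exact iff_of_false (fun h' => hshift (h.trans h')) (fun h' => hn (h.trans h'))
  classical
  exact if_congr (forall₂_congr fun i hi => not_congr (key i hi)) rfl rfl

lemma Hole.two_pow_dvd {s : ℤ} (hs : Hole b t s) : (2 : ℤ) ^ t ∣ s :=
  by_contra fun h => hs.2.2 (eta_add_mul_pp_of_not_dvd h)

lemma eta_eq_zero_of_dvd {n : ℤ} {i : ℕ} (hi : 1 ≤ i) (h : (2 : ℤ) ^ i * b i ∣ n) :
    eta b n = 0 := by
  rw [eta, if_neg]
  exact fun hfree => hfree i hi h

lemma eta_two_pow_mul_eq_one (hodd : ∀ i : ℕ, 1 ≤ i → Odd (b i)) {N : ℤ} (hN : Odd N)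
    (hb : ∀ i : ℕ, 1 ≤ i → i ≤ t → ¬ (b i : ℤ) ∣ N) : eta b (2 ^ t * N) = 1 := by
  rw [eta, if_pos]
  intro i hi hdvd
  rcases le_or_gt i t with hit | hti
  · have hcop : IsCoprime (b i : ℤ) (2 ^ t) :=
      (Int.isCoprime_two_right.mpr (by exact_mod_cast hodd i hi)).pow_right
    exact hb i hi hit (hcop.dvd_of_dvd_mul_left ((dvd_mul_left _ _).trans hdvd))
  · have h : (2 : ℤ) ^ t * 2 ∣ 2 ^ t * N := by
      rw [← pow_succ]
      exact (pow_dvd_pow 2 hti).trans ((dvd_mul_right _ _).trans hdvd)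
    exact Int.not_even_iff_odd.mpr hN
      (even_iff_two_dvd.mpr ((mul_dvd_mul_iff_left (by positivity)).mp h))

lemma odd_bProd (hodd : ∀ i : ℕ, 1 ≤ i → Odd (b i)) : Odd (bProd b t) :=
  Finset.prod_induction b Odd (fun _ _ => Odd.mul) odd_one
    fun i hi => hodd i (Finset.mem_Icc.mp hi).1

lemma isCoprime_bProd_two_mul (hodd : ∀ i : ℕ, 1 ≤ i → Odd (b i))
    (hcop : ∀ i j : ℕ, 1 ≤ i → 1 ≤ j → i ≠ j → Nat.Coprime (b i) (b j)) :
    IsCoprime (bProd b t : ℤ) (2 * b (t + 1)) := by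
  have h : Nat.Coprime (bProd b t) (2 * b (t + 1)) := by
    refine Nat.Coprime.mul_right (Nat.coprime_two_right.mpr (odd_bProd hodd))
      (Nat.Coprime.prod_left fun i hi => ?_)
    obtain ⟨hi, hit⟩ := Finset.mem_Icc.mp hi
    exact hcop i (t + 1) hi (by omega) (by omega)
  exact_mod_cast Nat.isCoprime_iff_coprime.mpr h

lemma exists_dvd_two_pow_mul_add_mul_pp (hodd : ∀ i : ℕ, 1 ≤ i → Odd (b i))
    (hcop : ∀ i j : ℕ, 1 ≤ i → 1 ≤ j → i ≠ j → Nat.Coprime (b i) (b j)) (m : ℤ) :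
    ∃ k : ℤ, (2 : ℤ) ^ (t + 1) * b (t + 1) ∣ 2 ^ t * m + k * pp b t := by
  obtain ⟨u, v, huv⟩ := isCoprime_bProd_two_mul (t := t) hodd hcop
  refine ⟨-(m * u), m * v, ?_⟩
  rw [pp_eq_two_pow_mul_bProd]
  linear_combination (-(2 : ℤ) ^ t * m) * huv

lemma hole_two_pow_mul (hodd : ∀ i : ℕ, 1 ≤ i → Odd (b i))
    (hcop : ∀ i j : ℕ, 1 ≤ i → 1 ≤ j → i ≠ j → Nat.Coprime (b i) (b j))
    {m : ℤ} (hm : 0 ≤ m) (hmP : m < bProd b t)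
    (hb : ∀ i : ℕ, 1 ≤ i → i ≤ t → ¬ (b i : ℤ) ∣ m) :
    Hole b t (2 ^ t * m) := by
  have hpp := pp_eq_two_pow_mul_bProd (b := b) (t := t)
  refine ⟨by positivity, by rw [hpp]; gcongr, ?_⟩
  obtain ⟨k, hk⟩ := exists_dvd_two_pow_mul_add_mul_pp (t := t) hodd hcop m
  refine notMem_Per_of_ne (k := 1 - m) (k' := k) ?_
  rw [eta_eq_zero_of_dvd (Nat.le_add_left 1 t) hk]
  have hNodd : Odd (m + (1 - m) * (bProd b t : ℤ)) := by
    obtain ⟨c, hc⟩ := (Int.odd_coe_nat _).mpr (odd_bProd (t := t) hodd)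
    exact ⟨c * (1 - m), by rw [hc]; ring⟩
  have hN : 2 ^ t * m + (1 - m) * (pp b t : ℤ) = 2 ^ t * (m + (1 - m) * (bProd b t : ℤ)) := by
    rw [hpp]; ring
  rw [hN, eta_two_pow_mul_eq_one hodd hNodd fun i hi hit hdvd => hb i hi hit ?_]
  · exact one_ne_zero
  simpa using dvd_sub hdvd ((dvd_bProd hi hit).mul_left (1 - m))

end

lemma le_emod_sub_of_dvd {d p a a' : ℤ} (ha : 0 ≤ a) (hap : a < p) (ha' : 0 ≤ a')
    (ha'p : a' < p) (hne : a ≠ a') (hdp : d ∣ p) (hd : d ∣ a' - a) :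
    d ≤ (a' - a) % p := by
  have hpos : 0 < p := by omega
  apply Int.le_of_dvd
  · refine lt_of_le_of_ne (Int.emod_nonneg _ hpos.ne') fun h0 => hne ?_
    have := Int.eq_zero_of_abs_lt_dvd (Int.dvd_of_emod_eq_zero h0.symm)
      (abs_sub_lt_of_nonneg_of_lt ha' ha'p ha hap)
    omega
  · rw [Int.dvd_iff_emod_eq_zero, Int.emod_emod_of_dvd _ hdp]
    exact Int.emod_eq_zero_of_dvd hd

theorem minimal_gap_eq (b : ℕ → ℕ)
    (hodd : ∀ i : ℕ, 1 ≤ i → Odd (b i))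
    (hgt : ∀ i : ℕ, 1 ≤ i → 1 < b i)
    (hcop : ∀ i j : ℕ, 1 ≤ i → 1 ≤ j → i ≠ j → Nat.Coprime (b i) (b j))
    (t : ℕ) (ht : 1 ≤ t) :
    IsLeast {d : ℤ | ∃ s s' : ℤ, Hole b t s ∧ Hole b t s' ∧ s ≠ s' ∧
        d = (s' - s) % (pp b t : ℤ)} ((2 : ℤ) ^ t) ∧
      Hole b t ((2 : ℤ) ^ t) ∧ Hole b t ((2 : ℤ) ^ (t + 1)) ∧
      ∀ s s' : ℤ, Hole b t s → Hole b t s' → (2 : ℤ) ^ t ∣ s - s' := by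
  have hb3 : ∀ i, 1 ≤ i → 3 ≤ (b i : ℤ) := fun i hi => by
    obtain ⟨c, hc⟩ := hodd i hi
    have := hgt i hi
    omega
  have hP : (3 : ℤ) ≤ bProd b t := (hb3 1 le_rfl).trans <| by
    exact_mod_cast Finset.single_le_prod' (fun i hi => (hgt i (Finset.mem_Icc.mp hi).1).le)
      (Finset.mem_Icc.mpr ⟨le_rfl, ht⟩)
  have hole₁ : Hole b t (2 ^ t) := by
    simpa using hole_two_pow_mul (t := t) hodd hcop zero_le_one (by omega)
      fun i hi _ h => by linarith [Int.le_of_dvd one_pos h, hb3 i hi]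
  have hole₂ : Hole b t (2 ^ (t + 1)) := by
    rw [pow_succ]
    exact hole_two_pow_mul hodd hcop zero_le_two (by omega)
      fun i hi _ h => by linarith [Int.le_of_dvd two_pos h, hb3 i hi]
  refine ⟨⟨⟨2 ^ t, 2 ^ (t + 1), hole₁, hole₂, ?_, ?_⟩, ?_⟩, hole₁, hole₂,
    fun s s' hs hs' => dvd_sub hs.two_pow_dvd hs'.two_pow_dvd⟩
  · exact (pow_lt_pow_right₀ one_lt_two t.lt_succ_self).ne
  · have hlt : (2 : ℤ) ^ t < pp b t := by
      rw [pp_eq_two_pow_mul_bProd]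
      nlinarith [pow_pos (two_pos (α := ℤ)) t]
    rw [pow_succ, show (2 : ℤ) ^ t * 2 - 2 ^ t = 2 ^ t by ring,
      Int.emod_eq_of_lt (by positivity) hlt]
  · rintro d ⟨s, s', hs, hs', hne, rfl⟩
    exact le_emod_sub_of_dvd hs.1 hs.2.1 hs'.1 hs'.2.1 hne two_pow_dvd_pp
      (dvd_sub hs'.two_pow_dvd hs.two_pow_dvd)
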